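/- Let X ∈ ℝ^{m×(d+1)} have full column rank, write X = (y | X') where y ∈ ℝᵐ is the first column and X' ∈ ℝ^{m×d} the remaining columns, and let φ = (X'ᵀX')⁻¹X'ᵀy be the least-squares coefficients of regressing y on X', with residual r = y - X'φ. Then the leverage scores satisfy ℓ_X(i) = ℓ_{X'}(i) + r(i)²/‖r‖² for every row index i. (In particular ‖r‖ > 0 since X has full column rank.) -/

import Mathlib

/-!
The hat matrix `A (AᵀA)⁻¹ Aᵀ` is the orthogonal projection onto the column space of `A`, so it
is unchanged by invertible column operations. Subtracting `X'φ` from the first column of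
`X = (y | X')` turns it into `(r | X')`, whose two blocks are orthogonal by the normal equations
`X'ᵀ r = 0`. The Gram matrix of `(r | X')` is then block diagonal, and the hat matrix splits as
the hat matrix of `X'` plus that of the single column `r`, namely `r rᵀ / ‖r‖²`.
-/

open Matrix

namespace Matrix

variable {m n p K : Type*} [Fintype n]

section CommRing

variable [Fintype m] [DecidableEq n] [CommRing K]

noncomputable def hatMatrix (A : Matrix m n K) : Matrix m m K := A * (Aᵀ * A)⁻¹ * Aᵀ

theorem hatMatrix_mul_of_isUnit_det (A : Matrix m n K) {U : Matrix n n K} (hU : IsUnit U.det) :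
    (A * U).hatMatrix = A.hatMatrix := by
  have hUt : IsUnit Uᵀ.det := by rwa [det_transpose]
  have hgram : (A * U)ᵀ * (A * U) = Uᵀ * (Aᵀ * A) * U := by
    simp only [transpose_mul, Matrix.mul_assoc]
  calc (A * U).hatMatrix
      = A * (U * U⁻¹) * (Aᵀ * A)⁻¹ * (Uᵀ⁻¹ * Uᵀ) * Aᵀ := by
        rw [hatMatrix, hgram, Matrix.mul_inv_rev, Matrix.mul_inv_rev, transpose_mul]
        simp only [Matrix.mul_assoc]
    _ = A.hatMatrix := by
        rw [mul_nonsing_inv U hU, nonsing_inv_mul Uᵀ hUt, Matrix.mul_one, Matrix.mul_one,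
          hatMatrix]

theorem hatMatrix_submatrix_equiv [Fintype p] [DecidableEq p] (A : Matrix m n K) (e : p ≃ n) :
    (A.submatrix id e).hatMatrix = A.hatMatrix := by
  rw [hatMatrix, transpose_submatrix, ← submatrix_mul _ _ _ _ _ Function.bijective_id,
    inv_submatrix_equiv, submatrix_mul_equiv, submatrix_mul_equiv, submatrix_id_id, hatMatrix]

theorem hatMatrix_fromCols_of_transpose_mul_eq_zero [Fintype p] [DecidableEq p]
    {A : Matrix m n K} {B : Matrix m p K} (hAB : Aᵀ * B = 0)
    (hA : IsUnit (Aᵀ * A)) (hB : IsUnit (Bᵀ * B)) :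
    (fromCols A B).hatMatrix = A.hatMatrix + B.hatMatrix := by
  have hBA : Bᵀ * A = 0 := by
    rw [← transpose_transpose (Bᵀ * A), transpose_mul, transpose_transpose, hAB, transpose_zero]
  simp only [hatMatrix, transpose_fromCols, fromRows_mul_fromCols, hAB, hBA,
    inv_fromBlocks_zero₂₁_of_isUnit_iff _ _ _ (iff_of_true hA hB), fromCols_mul_fromBlocks,
    fromCols_mul_fromRows]
  simp

theorem transpose_mulVec_residual_eq_zero {A : Matrix m n K} (hA : IsUnit (Aᵀ * A))
    (y : m → K) : Aᵀ *ᵥ (y - A *ᵥ ((Aᵀ * A)⁻¹ *ᵥ (Aᵀ *ᵥ y))) = 0 := by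
  rw [mulVec_sub, mulVec_mulVec, mulVec_mulVec,
    mul_nonsing_inv _ ((isUnit_iff_isUnit_det _).mp hA), one_mulVec, sub_self]

end CommRing

theorem hatMatrix_replicateCol [Fintype m] [Field K] (ι : Type*) [Unique ι] (r : m → K) :
    (replicateCol ι r).hatMatrix = (r ⬝ᵥ r)⁻¹ • vecMulVec r r := by
  ext i j
  simp only [hatMatrix, transpose_replicateCol, inv_subsingleton, mul_apply, replicateRow_apply,
    replicateCol_apply, Ring.inverse_eq_inv', Finset.univ_unique, Finset.sum_singleton,
    diagonal_apply_eq, dotProduct, smul_apply, vecMulVec_apply, smul_eq_mul]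
  ring

theorem mulVec_injective_of_rank_eq_card [Field K] {A : Matrix m n K}
    (hA : A.rank = Fintype.card n) : Function.Injective A.mulVec := by
  rw [mulVec_injective_iff, linearIndependent_iff_card_eq_finrank_span,
    hA.symm.trans A.rank_eq_finrank_span_cols]
  rfl

theorem mulVec_injective_of_fromCols [Semiring K] [Fintype p] {A : Matrix m n K}
    {B : Matrix m p K} (h : Function.Injective (fromCols A B).mulVec) :
    Function.Injective A.mulVec ∧ Function.Injective B.mulVec := by
  constructor
  · intro v w hvw
    have hsum := @h (v ⊕ᵥ 0) (w ⊕ᵥ 0) (by simp [hvw])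
    exact funext fun j => by simpa using congrFun hsum (Sum.inl j)
  · intro v w hvw
    have hsum := @h (0 ⊕ᵥ v) (0 ⊕ᵥ w) (by simp [hvw])
    exact funext fun j => by simpa using congrFun hsum (Sum.inr j)

theorem isUnit_transpose_mul_self [Fintype m] [DecidableEq n] [Field K] [LinearOrder K]
    [IsStrictOrderedRing K] {A : Matrix m n K} (hA : Function.Injective A.mulVec) :
    IsUnit (Aᵀ * A) := by
  have hker := ker_mulVecLin_transpose_mul_self A
  rw [(LinearMap.ker_eq_bot (f := A.mulVecLin)).mpr hA] at hker
  exact mulVec_injective_iff_isUnit.mp (LinearMap.ker_eq_bot.mp hker)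

end Matrix

/-- Leverage score recursion: `ℓ_X(i) = ℓ_{X'}(i) + r(i)²/‖r‖²` where `X = (y | X')`
and `r` is the residual of regressing `y` on `X'`. -/
theorem leverage_score_recursion {m d : ℕ} (X : Matrix (Fin m) (Fin (d + 1)) ℝ)
    (hX : X.rank = d + 1) :
    let y : Fin m → ℝ := fun i => X i 0
    let X' : Matrix (Fin m) (Fin d) ℝ := Matrix.of fun i j => X i j.succ
    let φ := (X'ᵀ * X')⁻¹ *ᵥ (X'ᵀ *ᵥ y)
    let r := y - X' *ᵥ φ
    0 < ∑ t, r t ^ 2 ∧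
      ∀ i, (X * (Xᵀ * X)⁻¹ * Xᵀ) i i =
        (X' * (X'ᵀ * X')⁻¹ * X'ᵀ) i i + r i ^ 2 / ∑ t, r t ^ 2 := by
  intro y X' φ r
  let e : Fin d ⊕ Unit ≃ Fin (d + 1) :=
    ((finSuccEquiv d).trans (Equiv.optionEquivSumPUnit _)).symm
  have hsplit : X.submatrix id e = fromCols X' (replicateCol Unit y) := by
    ext i (j | _) <;> rfl
  let L : Matrix (Fin d ⊕ Unit) (Fin d ⊕ Unit) ℝ := fromBlocks 1 (replicateCol Unit (-φ)) 0 1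
  have hL : IsUnit L.det := by simp [L]
  have hXL : fromCols X' (replicateCol Unit y) * L = fromCols X' (replicateCol Unit r) := by
    simp [L, fromCols_mul_fromBlocks, ← replicateCol_mulVec, mulVec_neg, r, sub_eq_neg_add]
  have hrank : (fromCols X' (replicateCol Unit r)).rank = Fintype.card (Fin d ⊕ Unit) := by
    rw [← hXL, rank_mul_eq_left_of_isUnit_det _ _ hL, ← hsplit]
    exact (rank_submatrix X (Equiv.refl _) e).trans (by simp [hX])
  obtain ⟨hX'inj, hrinj⟩ :=
    mulVec_injective_of_fromCols (mulVec_injective_of_rank_eq_card hrank)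
  have horth : X'ᵀ * replicateCol Unit r = 0 := by
    rw [← replicateCol_mulVec,
      transpose_mulVec_residual_eq_zero (isUnit_transpose_mul_self hX'inj) y, replicateCol_zero]
  have hhat : X.hatMatrix = X'.hatMatrix + (r ⬝ᵥ r)⁻¹ • vecMulVec r r := by
    rw [← hatMatrix_submatrix_equiv X e, hsplit, ← hatMatrix_mul_of_isUnit_det _ hL, hXL,
      hatMatrix_fromCols_of_transpose_mul_eq_zero horth (isUnit_transpose_mul_self hX'inj)
        (isUnit_transpose_mul_self hrinj), hatMatrix_replicateCol]
  have hr : r ≠ 0 := by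
    rintro hr0
    simpa using @hrinj 1 0 (by simp [hr0])
  refine ⟨?_, fun i => ?_⟩
  · obtain ⟨t, ht⟩ := Function.ne_iff.mp hr
    exact Finset.sum_pos' (fun _ _ => sq_nonneg _)
      ⟨t, Finset.mem_univ _, pow_two_pos_of_ne_zero ht⟩
  · change X.hatMatrix i i = X'.hatMatrix i i + _
    rw [hhat]
    simp [vecMulVec_apply, dotProduct, sq, div_eq_inv_mul]
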